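/- arXiv:1711.03512 — 6 statements merged into one kernel-verified Lean document; each statement's English description precedes it below -/
import Mathlib

section
/- For all real numbers x, y > 0, we have x·log(1 + y/x) + y·log(1 + x/y) ≥ 4·log(2)·x·y/(x + y). -/
open Real

lemma log_one_sub_ub (t : ℝ) (h0 : 0 ≤ t) (h1 : t < 1) :
    Real.log (1 - t) ≤ -(t + t^2/2 + t^3/3 + t^4/4 + t^5/5 + t^6/6 + t^7/7 + t^8/8
      + t^9/9 + t^10/10) + t^11/(1-t) := by
  have h := Real.abs_log_sub_add_sum_range_le (x := t) (by rw [abs_of_nonneg h0]; exact h1) 10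
  rw [abs_of_nonneg h0] at h
  simp [Finset.sum_range_succ] at h
  rw [abs_le] at h
  have := h.2
  push_cast at this ⊢
  nlinarith [this]

lemma log_one_add_ub (t : ℝ) (h0 : 0 ≤ t) (h1 : t < 1) :
    Real.log (1 + t) ≤ (t - t^2/2 + t^3/3 - t^4/4 + t^5/5 - t^6/6 + t^7/7 - t^8/8
      + t^9/9 - t^10/10) + t^11/(1-t) := by
  have h := Real.abs_log_sub_add_sum_range_le (x := -t) (by rw [abs_neg, abs_of_nonneg h0]; exact h1) 10
  rw [abs_neg, abs_of_nonneg h0] at h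
  simp [Finset.sum_range_succ] at h
  rw [abs_le] at h
  have := h.2
  push_cast at this ⊢
  nlinarith [this]

lemma key (t : ℝ) (h0 : 0 ≤ t) (h1 : t < 1) :
    (1+t) * Real.log (1+t) + (1-t) * Real.log (1-t) ≤ 2 * Real.log 2 * t^2 := by
  have hL : (0.6931471803 : ℝ) < Real.log 2 := Real.log_two_gt_d9
  rcases le_or_gt t 0.68 with hc | hc
  · -- small t : power series
    have hA := log_one_add_ub t h0 h1
    have hB := log_one_sub_ub t h0 h1
    have h1t : (0.32 : ℝ) ≤ 1 - t := by linarith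
    have hE : t^11/(1-t) ≤ t^11/0.32 :=
      div_le_div_of_nonneg_left (by positivity) (by norm_num) h1t
    have hp1 : (1+t) * Real.log (1+t) ≤ (1+t) * ((t - t^2/2 + t^3/3 - t^4/4 + t^5/5 - t^6/6 + t^7/7 - t^8/8 + t^9/9 - t^10/10) + t^11/0.32) :=
      mul_le_mul_of_nonneg_left (by linarith) (by linarith)
    have hp2 : (1-t) * Real.log (1-t) ≤ (1-t) * (-(t + t^2/2 + t^3/3 + t^4/4 + t^5/5 + t^6/6 + t^7/7 + t^8/8 + t^9/9 + t^10/10) + t^11/0.32) :=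
      mul_le_mul_of_nonneg_left (by linarith) (by linarith)
    have hexp : (1+t) * ((t - t^2/2 + t^3/3 - t^4/4 + t^5/5 - t^6/6 + t^7/7 - t^8/8 + t^9/9 - t^10/10) + t^11/0.32)
        + (1-t) * (-(t + t^2/2 + t^3/3 + t^4/4 + t^5/5 + t^6/6 + t^7/7 + t^8/8 + t^9/9 + t^10/10) + t^11/0.32)
        = t^2 + t^4/6 + t^6/15 + t^8/28 + t^10/45 + 6.25 * t^11 := by ring
    have h2 : t^2 ≤ 0.4624 := by nlinarith
    have h4 : t^4 ≤ 0.4624 * t^2 := by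
      have e : t^4 = t^2 * t^2 := by ring
      rw [e]; exact mul_le_mul_of_nonneg_right h2 (sq_nonneg t)
    have h6 : t^6 ≤ 0.4624 * t^4 := by
      have e : t^6 = t^2 * t^4 := by ring
      rw [e]; exact mul_le_mul_of_nonneg_right h2 (pow_nonneg h0 4)
    have h8 : t^8 ≤ 0.4624 * t^6 := by
      have e : t^8 = t^2 * t^6 := by ring
      rw [e]; exact mul_le_mul_of_nonneg_right h2 (pow_nonneg h0 6)
    have h10 : t^10 ≤ 0.4624 * t^8 := by
      have e : t^10 = t^2 * t^8 := by ring
      rw [e]; exact mul_le_mul_of_nonneg_right h2 (pow_nonneg h0 8)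
    have h11 : t^11 ≤ 0.68 * t^10 := by
      have e : t^11 = t * t^10 := by ring
      rw [e]; exact mul_le_mul_of_nonneg_right hc (pow_nonneg h0 10)
    have hfin : (1.3862 : ℝ) * t^2 ≤ 2 * Real.log 2 * t^2 :=
      mul_le_mul_of_nonneg_right (by linarith) (sq_nonneg t)
    have n4 := pow_nonneg h0 4
    have n6 := pow_nonneg h0 6
    have n8 := pow_nonneg h0 8
    have n10 := pow_nonneg h0 10
    have n11 := pow_nonneg h0 11
    linarith
  · -- large t : tangent bounds
    have ht2 : (0 : ℝ) < 1 + t := by linarith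
    have hA : Real.log (1+t) ≤ Real.log 2 + (t-1)/2 := by
      have : Real.log (1+t) = Real.log 2 + Real.log ((1+t)/2) := by
        rw [← Real.log_mul (by norm_num) (by positivity)]; ring_nf
      rw [this]
      have := Real.log_le_sub_one_of_pos (show (0:ℝ) < (1+t)/2 by linarith)
      linarith
    have hB : Real.log (1-t) ≤ 1 - 3 * Real.log 2 := by
      rw [Real.log_le_iff_le_exp (by linarith)]
      have he : Real.exp (1 - 3 * Real.log 2) = Real.exp 1 / 8 := by
        rw [Real.exp_sub]
        congr 1
        rw [show (3 : ℝ) * Real.log 2 = Real.log (2^3) by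
          rw [Real.log_pow]; push_cast; ring]
        rw [Real.exp_log (by norm_num)]
        norm_num
      rw [he]
      have := Real.exp_one_gt_d9
      linarith
    have w1 : (1+t) * Real.log (1+t) ≤ (1+t) * (Real.log 2 + (t-1)/2) :=
      mul_le_mul_of_nonneg_left hA (by linarith)
    have w2 : (1-t) * Real.log (1-t) ≤ (1-t) * (1 - 3 * Real.log 2) :=
      mul_le_mul_of_nonneg_left hB (by linarith)
    have hq : 0 ≤ (2 * Real.log 2 - 1/2) * (1-t)^2 :=
      mul_nonneg (by linarith) (sq_nonneg (1-t))
    nlinarith [hq]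

lemma main_aux (x y : ℝ) (hx : 0 < x) (hy : 0 < y) (hxy : y ≤ x) :
    x * Real.log (1 + y / x) + y * Real.log (1 + x / y) ≥
      4 * Real.log 2 * x * y / (x + y) := by
  obtain ⟨s, hs0, hs⟩ : ∃ s : ℝ, 0 < s ∧ x + y = s := ⟨x + y, by positivity, rfl⟩
  obtain ⟨t, ht0, ht1, hxe, hye⟩ : ∃ t : ℝ, 0 ≤ t ∧ t < 1 ∧ x = s*(1+t)/2 ∧ y = s*(1-t)/2 := by
    refine ⟨(x - y)/s, div_nonneg (by linarith) hs0.le, ?_, by field_simp; linarith, by field_simp; linarith⟩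
    rw [div_lt_one hs0]; linarith
  rw [hs]
  have h1t : (0:ℝ) < 1 + t := by linarith
  have h2t : (0:ℝ) < 1 - t := by linarith
  have e1 : 1 + y / x = s / x := by field_simp; linarith
  have e2 : 1 + x / y = s / y := by field_simp; linarith
  have l1 : Real.log (1 + y / x) = Real.log s - Real.log x := by
    rw [e1, Real.log_div (ne_of_gt hs0) (ne_of_gt hx)]
  have l2 : Real.log (1 + x / y) = Real.log s - Real.log y := by
    rw [e2, Real.log_div (ne_of_gt hs0) (ne_of_gt hy)]
  have lx : Real.log x = Real.log s + Real.log (1 + t) - Real.log 2 := by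
    rw [hxe, show s * (1+t) / 2 = s * ((1+t)/2) by ring,
      Real.log_mul (ne_of_gt hs0) (by positivity),
      Real.log_div (ne_of_gt h1t) (by norm_num)]
    ring
  have ly : Real.log y = Real.log s + Real.log (1 - t) - Real.log 2 := by
    rw [hye, show s * (1-t) / 2 = s * ((1-t)/2) by ring,
      Real.log_mul (ne_of_gt hs0) (by positivity),
      Real.log_div (ne_of_gt h2t) (by norm_num)]
    ring
  have hrhs : 4 * Real.log 2 * x * y / s = Real.log 2 * s * (1 - t^2) := by
    rw [hxe, hye]; field_simp; ring
  rw [l1, l2, lx, ly, hrhs]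
  have hk := key t ht0 ht1
  have hmul : (s/2) * ((1+t) * Real.log (1+t) + (1-t) * Real.log (1-t))
      ≤ (s/2) * (2 * Real.log 2 * t^2) :=
    mul_le_mul_of_nonneg_left hk (by positivity)
  have hx' : x * (Real.log s - (Real.log s + Real.log (1+t) - Real.log 2))
      + y * (Real.log s - (Real.log s + Real.log (1-t) - Real.log 2))
      = s * Real.log 2 - (s/2) * ((1+t) * Real.log (1+t) + (1-t) * Real.log (1-t)) := by
    rw [hxe, hye]; ring
  have e3 : (s/2) * (2 * Real.log 2 * t^2)
      = s * Real.log 2 - Real.log 2 * s * (1 - t^2) := by ring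
  linarith [hmul, hx', e3]

theorem stmt_0 (x y : ℝ) (hx : 0 < x) (hy : 0 < y) :
    x * Real.log (1 + y / x) + y * Real.log (1 + x / y) ≥
      4 * Real.log 2 * x * y / (x + y) := by
  rcases le_total y x with h | h
  · exact main_aux x y hx hy h
  · have := main_aux y x hy hx h
    have e : 4 * Real.log 2 * y * x / (y + x) = 4 * Real.log 2 * x * y / (x + y) := by
      rw [add_comm y x]; ring
    linarith [this, e.le]
end

section
/- For all real t > 0, the function f(t) = (1/t + 1)·log(1 + t) + (1 + t)·log(1 + 1/t) satisfies f(t) ≥ f(1) = 4·log(2). -/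
/-!
Put `p = 1 / (1 + t)` and `q = t / (1 + t)`, so that `p + q = 1` and
`f t = L p + L q` with `L x = -log (1 - x) / x = ∑ xⁿ / (n + 1)`.
By convexity of `x ↦ xⁿ`, `pⁿ + qⁿ ≥ 2 (1/2)ⁿ` for every `n`, so comparing the series
termwise gives `f t ≥ 2 L (1/2) = 4 log 2 = f 1`.
-/

open Real

theorem hasSum_pow_div_succ_of_abs_lt_one {x : ℝ} (hx₀ : x ≠ 0) (hx : |x| < 1) :
    HasSum (fun n : ℕ => x ^ n / (n + 1)) (-log (1 - x) / x) := by
  refine ((hasSum_pow_div_log_of_abs_lt_one hx).div_const x).congr_fun fun n => ?_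
  field_simp
  ring

theorem two_mul_half_pow_le_pow_add_pow {p q : ℝ} (hp : 0 ≤ p) (hq : 0 ≤ q) (hpq : p + q = 1)
    (n : ℕ) : 2 * (1 / 2) ^ n ≤ p ^ n + q ^ n := by
  have h := (convexOn_pow n).2 hp hq (by norm_num : (0 : ℝ) ≤ 1 / 2)
    (by norm_num : (0 : ℝ) ≤ 1 / 2) (by norm_num)
  simp only [smul_eq_mul, ← mul_add, hpq, mul_one] at h
  linarith

theorem four_mul_log_two_le_neg_log_one_sub_div_add {p q : ℝ} (hp : 0 < p) (hq : 0 < q)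
    (hpq : p + q = 1) : 4 * log 2 ≤ -log (1 - p) / p + -log (1 - q) / q := by
  have hasSum_L {x : ℝ} (hx₀ : 0 < x) (hx₁ : x < 1) :=
    hasSum_pow_div_succ_of_abs_lt_one hx₀.ne' (abs_lt.2 ⟨by linarith, hx₁⟩)
  have hHalf := (hasSum_L (by norm_num : (0 : ℝ) < 1 / 2) (by norm_num)).mul_left 2
  have hL : -log (1 - 1 / 2) / (1 / 2) = 2 * log 2 := by
    rw [show (1 : ℝ) - 1 / 2 = 2⁻¹ by norm_num, log_inv]
    ring
  rw [hL, ← mul_assoc, show (2 : ℝ) * 2 = 4 by norm_num] at hHalf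
  refine hasSum_le (fun n => ?_) hHalf
    ((hasSum_L hp (by linarith)).add (hasSum_L hq (by linarith)))
  rw [← add_div, ← mul_div_assoc]
  gcongr
  exact two_mul_half_pow_le_pow_add_pow hp.le hq.le hpq n

theorem stmt_1 (f : ℝ → ℝ)
    (hf : ∀ t : ℝ, f t = (1 / t + 1) * Real.log (1 + t) + (1 + t) * Real.log (1 + 1 / t)) :
    (∀ t : ℝ, 0 < t → f t ≥ f 1) ∧ f 1 = 4 * Real.log 2 := by
  have hf1 : f 1 = 4 * Real.log 2 := by
    rw [hf]
    norm_num
    ring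
  refine ⟨fun t ht => ?_, hf1⟩
  have h1t : 0 < 1 + t := by linarith
  have hsplit : f t =
      -log (1 - 1 / (1 + t)) / (1 / (1 + t)) + -log (1 - t / (1 + t)) / (t / (1 + t)) := by
    rw [hf, show 1 - 1 / (1 + t) = t / (1 + t) by field_simp; ring,
      show 1 - t / (1 + t) = 1 / (1 + t) by field_simp; ring,
      show 1 + 1 / t = (1 + t) / t by field_simp; ring,
      log_div ht.ne' h1t.ne', log_div h1t.ne' ht.ne']
    simp only [one_div, log_inv]
    field_simp
    ring
  rw [hf1, hsplit]
  exact four_mul_log_two_le_neg_log_one_sub_div_add (by positivity) (by positivity)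
    (by field_simp)
end

section
/- Let f₁, ..., f_K be probability densities on ℝᵈ with priors p₁, ..., p_K > 0 summing to 1. Fix a class k, let p_g = Σ_{l≠k} p_l and g_k(x) = (Σ_{l≠k} p_l f_l(x))/p_g. Then Q_{e,k} := ∫ min{p_k f_k(x), p_g g_k(x)} dx is less than or equal to the One-vs-Rest Bayes error rate P_{e,k} := ∫_{max_{l≠k} p_l f_l(x) ≥ p_k f_k(x)} p_k f_k(x) dx + Σ_{c≠k} ∫_{max_{l≠k} p_l f_l(x) < p_k f_k(x)} p_c f_c(x) dx. -/
/-!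
On the region `A = {p_k f_k ≤ max_{l≠k} p_l f_l}` bound the minimum by `p_k f_k`, and on its
complement by `p_g g_k = ∑_{l≠k} p_l f_l`; integrating these two pointwise bounds gives `P_{e,k}`.
-/

open MeasureTheory

theorem Finset.aemeasurable_sup' {α ι M : Type*} [MeasurableSpace α] {μ : Measure α}
    [MeasurableSpace M] [SemilatticeSup M] [MeasurableSup₂ M]
    {s : Finset ι} (hs : s.Nonempty) {f : ι → α → M} (hf : ∀ i ∈ s, AEMeasurable (f i) μ) :
    AEMeasurable (fun x => s.sup' hs fun i => f i x) μ := by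
  simp_rw [← Finset.sup'_apply]
  exact Finset.sup'_induction (p := (AEMeasurable · μ)) hs _ (fun _ hf _ hg => hf.sup hg) hf

theorem integral_min_le_setIntegral_add_setIntegral_compl {α : Type*} [MeasurableSpace α]
    {μ : Measure α} {g h : α → ℝ} (hg : Integrable g μ) (hh : Integrable h μ) {s : Set α}
    (hs : NullMeasurableSet s μ) :
    ∫ x, min (g x) (h x) ∂μ ≤ (∫ x in s, g x ∂μ) + ∫ x in sᶜ, h x ∂μ := by
  have hmin : Integrable (fun x => min (g x) (h x)) μ := hg.inf hh
  rw [← integral_add_compl₀ hs hmin]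
  apply add_le_add
  · exact setIntegral_mono hmin.integrableOn hg.integrableOn fun x => min_le_left _ _
  · exact setIntegral_mono hmin.integrableOn hh.integrableOn fun x => min_le_right _ _

theorem stmt_5_general {d K : ℕ}
    (f : Fin K → (Fin d → ℝ) → ℝ) (p : Fin K → ℝ)
    (hint : ∀ c, Integrable (f c))
    (hp : ∀ c, 0 < p c)
    (k : Fin K) (hne : (Finset.univ.erase k).Nonempty) :
    ∫ x, min (p k * f k x)
        ((∑ l ∈ Finset.univ.erase k, p l) *
          ((∑ l ∈ Finset.univ.erase k, p l * f l x) / (∑ l ∈ Finset.univ.erase k, p l))) ≤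
      (∫ x in {x | p k * f k x ≤ (Finset.univ.erase k).sup' hne fun l => p l * f l x},
          p k * f k x) +
      ∑ c ∈ Finset.univ.erase k,
        ∫ x in {x | ((Finset.univ.erase k).sup' hne fun l => p l * f l x) < p k * f k x},
          p c * f c x := by
  have hpg : ∑ l ∈ Finset.univ.erase k, p l ≠ 0 := (Finset.sum_pos (fun l _ => hp l) hne).ne'
  have hweighted : ∀ c, Integrable fun x => p c * f c x := fun c => (hint c).const_mul _
  simp_rw [mul_div_cancel₀ _ hpg]
  rw [← integral_finsetSum _ fun l _ => (hweighted l).integrableOn]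
  have hcompl : {x | ((Finset.univ.erase k).sup' hne fun l => p l * f l x) < p k * f k x} =
      {x | p k * f k x ≤ (Finset.univ.erase k).sup' hne fun l => p l * f l x}ᶜ := by
    ext x
    simp
  rw [hcompl]
  exact integral_min_le_setIntegral_add_setIntegral_compl (hweighted k)
    (integrable_finsetSum _ fun l _ => hweighted l)
    (nullMeasurableSet_le (hweighted k).aemeasurable
      (Finset.aemeasurable_sup' hne fun l _ => (hweighted l).aemeasurable))

theorem stmt_5 {d K : ℕ} (hK : 1 < K)
    (f : Fin K → (Fin d → ℝ) → ℝ) (p : Fin K → ℝ)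
    (hmeas : ∀ c, Measurable (f c)) (hnn : ∀ c x, 0 ≤ f c x)
    (hint : ∀ c, Integrable (f c)) (hI : ∀ c, ∫ x, f c x = 1)
    (hp : ∀ c, 0 < p c) (hsum : ∑ c, p c = 1)
    (k : Fin K) (hne : (Finset.univ.erase k).Nonempty) :
    ∫ x, min (p k * f k x)
        ((∑ l ∈ Finset.univ.erase k, p l) *
          ((∑ l ∈ Finset.univ.erase k, p l * f l x) / (∑ l ∈ Finset.univ.erase k, p l))) ≤
      (∫ x in {x | p k * f k x ≤ (Finset.univ.erase k).sup' hne fun l => p l * f l x},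
          p k * f k x) +
      ∑ c ∈ Finset.univ.erase k,
        ∫ x in {x | ((Finset.univ.erase k).sup' hne fun l => p l * f l x) < p k * f k x},
          p c * f c x :=
  stmt_5_general f p hint hp k hne
end

section
/- For probability densities f₁, f₂ on ℝᵈ with equal priors 1/2, the Henze-Penrose upper bound on the Bayes error rate is tighter than the Jensen-Shannon upper bound: ∫ f₁f₂/(f₁+f₂) dx ≤ (1/4)∫ [f₁·log₂(1 + f₂/f₁) + f₂·log₂(1 + f₁/f₂)] dx. -/
/-! With `p = a / (a + b)` the two integrands are `(a + b) p (1 - p)` and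
`(a + b) H(p) / (4 log 2)`, where `H` is the binary entropy in nats, so the theorem reduces to
`4 log 2 · p (1 - p) ≤ H(p)` on `[0, 1]`. Both sides are symmetric about `1/2` and agree at `0`
and `1/2`. Their difference has second derivative `8 log 2 - 1 / (p (1 - p))`, so it is concave
on `[0, c]` and convex on `[c, 1/2]` with zero slope at `1/2`: it decreases to `0` on `[c, 1/2]`
and, on `[0, c]`, stays above the minimum of its (nonnegative) endpoint values. Integrability of
the right-hand integrand comes from `0 ≤ H ≤ log 2`. -/

open MeasureTheory Real Set

theorem nonneg_on_Icc_of_concave_then_convex {f f' f'' : ℝ → ℝ} {a b c x : ℝ}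
    (hac : a < c) (hcb : c ≤ b) (hf : ContinuousOn f (Icc a b))
    (hf' : ∀ y ∈ Ioc a b, HasDerivAt f (f' y) y)
    (hf'' : ∀ y ∈ Ioc a b, HasDerivAt f' (f'' y) y)
    (hconcave : ∀ y ∈ Ioo a c, f'' y ≤ 0) (hconvex : ∀ y ∈ Ioo c b, 0 ≤ f'' y)
    (ha : 0 ≤ f a) (hb : 0 ≤ f b) (hf'b : f' b ≤ 0) (hx : x ∈ Icc a b) : 0 ≤ f x := by
  have hcb_sub : Icc c b ⊆ Ioc a b := fun y hy => ⟨hac.trans_le hy.1, hy.2⟩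
  have hac_sub : Ioo a c ⊆ Ioc a b := fun y hy => ⟨hy.1, hy.2.le.trans hcb⟩
  have hf'_mono : MonotoneOn f' (Icc c b) := by
    refine monotoneOn_of_hasDerivWithinAt_nonneg (f' := f'') (convex_Icc c b)
      (fun y hy => (hf'' y (hcb_sub hy)).continuousAt.continuousWithinAt) ?_ ?_ <;>
    rw [interior_Icc]
    · exact fun y hy => (hf'' y (hcb_sub (Ioo_subset_Icc_self hy))).hasDerivWithinAt
    · exact hconvex
  have hf_anti : AntitoneOn f (Icc c b) := by
    refine antitoneOn_of_hasDerivWithinAt_nonpos (f' := f') (convex_Icc c b)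
      (hf.mono (Icc_subset_Icc_left hac.le)) ?_ ?_ <;>
    rw [interior_Icc]
    · exact fun y hy => (hf' y (hcb_sub (Ioo_subset_Icc_self hy))).hasDerivWithinAt
    · exact fun y hy =>
        (hf'_mono (Ioo_subset_Icc_self hy) (right_mem_Icc.2 hcb) hy.2.le).trans hf'b
  have hright : ∀ y ∈ Icc c b, 0 ≤ f y := fun y hy =>
    hb.trans (hf_anti hy (right_mem_Icc.2 hcb) hy.2)
  have hf_concave : ConcaveOn ℝ (Icc a c) f := by
    refine concaveOn_of_hasDerivWithinAt2_nonpos (f' := f') (f'' := f'') (convex_Icc a c)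
      (hf.mono (Icc_subset_Icc_right hcb)) ?_ ?_ ?_ <;>
    rw [interior_Icc]
    · exact fun y hy => (hf' y (hac_sub hy)).hasDerivWithinAt
    · exact fun y hy => (hf'' y (hac_sub hy)).hasDerivWithinAt
    · exact hconcave
  rcases le_total x c with hxc | hcx
  · exact le_min ha (hright c ⟨le_rfl, hcb⟩) |>.trans <|
      hf_concave.min_le_of_mem_Icc (left_mem_Icc.2 hac.le) (right_mem_Icc.2 hac.le) ⟨hx.1, hxc⟩
  · exact hright x ⟨hcx, hx.2⟩

lemma hasDerivAt_binEntropy_sub_quadratic {p : ℝ} (hp₀ : p ≠ 0) (hp₁ : p ≠ 1) (k : ℝ) :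
    HasDerivAt (fun q => binEntropy q - k * (q * (1 - q)))
      (log (1 - p) - log p - k * (1 - 2 * p)) p := by
  have hquad : HasDerivAt (fun q : ℝ => q * (1 - q)) (1 - 2 * p) p :=
    ((hasDerivAt_id' p).mul ((hasDerivAt_id' p).const_sub 1)).congr_deriv (by ring)
  exact (hasDerivAt_binEntropy hp₀ hp₁).sub (hquad.const_mul k)

lemma hasDerivAt_deriv_binEntropy_sub_quadratic {p : ℝ} (hp₀ : p ≠ 0) (hp₁ : p ≠ 1)
    (k : ℝ) :
    HasDerivAt (fun q => log (1 - q) - log q - k * (1 - 2 * q))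
      (2 * k - 1 / (p * (1 - p))) p := by
  have hsub : 1 - p ≠ 0 := sub_ne_zero.2 hp₁.symm
  have hlog₁ : HasDerivAt (fun q => log (1 - q)) (-1 / (1 - p)) p := by
    simpa using ((hasDerivAt_id p).const_sub 1).log hsub
  have hlin : HasDerivAt (fun q : ℝ => k * (1 - 2 * q)) (-(k * 2)) p := by
    simpa using (((hasDerivAt_id p).const_mul 2).const_sub 1).const_mul k
  refine ((hlog₁.sub ((hasDerivAt_id' p).log hp₀)).sub hlin).congr_deriv ?_
  field_simp
  ring

/-- The inflection point of `binEntropy p - 4 * log 2 * (p * (1 - p))` in `(0, 1/2)`. -/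
lemma exists_eight_mul_log_two_mul_mul_one_sub_eq_one :
    ∃ c : ℝ, 0 < c ∧ c < 2⁻¹ ∧ 8 * log 2 * (c * (1 - c)) = 1 := by
  have hlog : (2 : ℝ)⁻¹ < log 2 := by linarith [log_two_gt_d9]
  set r := √(1 - 1 / (2 * log 2))
  have hpos : 0 < 1 - 1 / (2 * log 2) := by
    rw [sub_pos, div_lt_one (by linarith)]; linarith
  have hr : r ^ 2 = 1 - 1 / (2 * log 2) := sq_sqrt hpos.le
  have hr1 : r < 1 := by
    rw [sqrt_lt' one_pos, one_pow, sub_lt_self_iff]; positivity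
  refine ⟨(1 - r) / 2, by linarith, by linarith [sqrt_pos.2 hpos], ?_⟩
  have : (1 - r) / 2 * (1 - (1 - r) / 2) = (1 - r ^ 2) / 4 := by ring
  rw [this, hr]
  field_simp
  ring

theorem four_mul_log_two_mul_le_binEntropy {p : ℝ} (hp₀ : 0 ≤ p) (hp₁ : p ≤ 1) :
    4 * log 2 * (p * (1 - p)) ≤ binEntropy p := by
  wlog hp : p ≤ 2⁻¹ generalizing p
  · simpa [mul_comm] using this (p := 1 - p) (by linarith) (by linarith) (by linarith)
  obtain ⟨c, hc₀, hc, hc₁⟩ := exists_eight_mul_log_two_mul_mul_one_sub_eq_one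
  have hlog : 0 < log 2 := log_pos one_lt_two
  rw [← sub_nonneg]
  refine nonneg_on_Icc_of_concave_then_convex
    (f := fun q => binEntropy q - 4 * log 2 * (q * (1 - q))) hc₀ hc.le (by fun_prop)
    (fun y hy => hasDerivAt_binEntropy_sub_quadratic hy.1.ne' (by linarith [hy.2]) _)
    (fun y hy => hasDerivAt_deriv_binEntropy_sub_quadratic hy.1.ne' (by linarith [hy.2]) _)
    (fun y hy => ?_) (fun y hy => ?_) (by simp) ?_ ?_ ⟨hp₀, hp⟩
  · have : y * (1 - y) < c * (1 - c) := by nlinarith [hy.1, hy.2]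
    rw [sub_nonpos, le_div_iff₀ (by nlinarith [hy.1, hy.2])]
    nlinarith [mul_lt_mul_of_pos_left this hlog]
  · have : c * (1 - c) < y * (1 - y) := by nlinarith [hy.1, hy.2]
    rw [sub_nonneg, div_le_iff₀ (by nlinarith [hy.1, hy.2])]
    nlinarith [mul_lt_mul_of_pos_left this hlog]
  · simp only [binEntropy_two_inv]; linarith
  · norm_num

lemma mul_logb_one_add_div_add_mul_logb_one_add_div_eq_binEntropy {a b : ℝ}
    (ha : 0 ≤ a) (hb : 0 ≤ b) :
    a * logb 2 (1 + b / a) + b * logb 2 (1 + a / b) =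
      (a + b) * binEntropy (a / (a + b)) / log 2 := by
  rcases ha.eq_or_lt with rfl | ha
  · simp
  rcases hb.eq_or_lt with rfl | hb
  · simp [ha.ne']
  have hab : a + b ≠ 0 := by positivity
  have hsub : 1 - a / (a + b) = b / (a + b) := by field_simp; ring
  rw [binEntropy, hsub, inv_div, inv_div, one_add_div ha.ne', one_add_div hb.ne', add_comm b a,
    logb, logb]
  field_simp

lemma mul_div_add_le_binEntropy {a b : ℝ} (ha : 0 ≤ a) (hb : 0 ≤ b) :
    a * b / (a + b) ≤ (a + b) * binEntropy (a / (a + b)) / (4 * log 2) := by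
  rcases (add_nonneg ha hb).eq_or_lt with hab | hab
  · simp [← hab]
  set p := a / (a + b)
  have hp₀ : 0 ≤ p := by positivity
  have hp₁ : p ≤ 1 := div_le_one_of_le₀ (by linarith) hab.le
  have hprod : a * b / (a + b) = (a + b) * (p * (1 - p)) := by
    simp only [p]; field_simp; ring
  rw [hprod, le_div_iff₀ (by positivity [log_pos one_lt_two])]
  nlinarith [four_mul_log_two_mul_le_binEntropy hp₀ hp₁]

lemma MeasureTheory.Integrable.mul_binEntropy_div_add {α : Type*} [MeasurableSpace α]
    {μ : Measure α} {f g : α → ℝ} (hf : Integrable f μ) (hg : Integrable g μ)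
    (hf₀ : ∀ x, 0 ≤ f x) (hg₀ : ∀ x, 0 ≤ g x) :
    Integrable (fun x => (f x + g x) * binEntropy (f x / (f x + g x))) μ := by
  refine (hf.add hg).mul_bdd (c := log 2) ?_ (.of_forall fun x => ?_)
  · exact (binEntropy_continuous.measurable.comp_aemeasurable
      (hf.aemeasurable.div (hf.aemeasurable.add hg.aemeasurable))).aestronglyMeasurable
  · have h₀ : 0 ≤ f x / (f x + g x) := div_nonneg (hf₀ x) (add_nonneg (hf₀ x) (hg₀ x))
    have h₁ : f x / (f x + g x) ≤ 1 :=
      div_le_one_of_le₀ (le_add_of_nonneg_right (hg₀ x)) (add_nonneg (hf₀ x) (hg₀ x))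
    rw [norm_of_nonneg (binEntropy_nonneg h₀ h₁)]
    exact binEntropy_le_log_two

theorem stmt_9_general {d : ℕ} (f₁ f₂ : (Fin d → ℝ) → ℝ)
    (hnn₁ : ∀ x, 0 ≤ f₁ x) (hnn₂ : ∀ x, 0 ≤ f₂ x)
    (hi₁ : Integrable f₁) (hi₂ : Integrable f₂) :
    ∫ x, f₁ x * f₂ x / (f₁ x + f₂ x) ≤
      (1 / 4) * ∫ x, (f₁ x * Real.logb 2 (1 + f₂ x / f₁ x) +
        f₂ x * Real.logb 2 (1 + f₁ x / f₂ x)) := by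
  simp_rw [mul_logb_one_add_div_add_mul_logb_one_add_div_eq_binEntropy (hnn₁ _) (hnn₂ _),
    ← integral_const_mul]
  refine integral_mono_of_nonneg (.of_forall fun x => ?_)
    (((hi₁.mul_binEntropy_div_add hi₂ hnn₁ hnn₂).div_const _).const_mul _)
    (.of_forall fun x => ?_)
  · have := hnn₁ x; have := hnn₂ x
    positivity
  · dsimp only
    exact (mul_div_add_le_binEntropy (hnn₁ x) (hnn₂ x)).trans_eq (by ring)

theorem stmt_9 {d : ℕ} (f₁ f₂ : (Fin d → ℝ) → ℝ)
    (hm₁ : Measurable f₁) (hm₂ : Measurable f₂)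
    (hnn₁ : ∀ x, 0 ≤ f₁ x) (hnn₂ : ∀ x, 0 ≤ f₂ x)
    (hi₁ : Integrable f₁) (hi₂ : Integrable f₂)
    (hI₁ : ∫ x, f₁ x = 1) (hI₂ : ∫ x, f₂ x = 1) :
    ∫ x, f₁ x * f₂ x / (f₁ x + f₂ x) ≤
      (1 / 4) * ∫ x, (f₁ x * Real.logb 2 (1 + f₂ x / f₁ x) +
        f₂ x * Real.logb 2 (1 + f₁ x / f₂ x)) :=
  stmt_9_general f₁ f₂ hnn₁ hnn₂ hi₁ hi₂
end

section
/- For densities f₁, f₂ with priors p₁, p₂ > 0 summing to 1, the pointwise identity min{p₁f₁(x), p₂f₂(x)} = 1/2·(p₁f₁(x) + p₂f₂(x)) − 1/2·|p₁f₁(x) − p₂f₂(x)| together with the Cauchy-Schwarz inequality gives the Henze-Penrose lower bound: P_e(f₁,f₂) ≥ 1/2 − 1/2·√(u_HP(f₁,f₂)), where u_HP(f₁,f₂) = ∫ (p₁f₁ − p₂f₂)²/(p₁f₁ + p₂f₂) dx. -/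
/-! Write `a = p₁ f₁` and `b = p₂ f₂`. Integrating `min a b = (a + b)/2 - |a - b|/2` gives
`P_e = 1/2 - (1/2) ∫ |a - b|`, and Cauchy–Schwarz applied to
`|a - b| = (|a - b| / √(a + b)) · √(a + b)` bounds `∫ |a - b|` by
`√(u_HP) · √(∫ (a + b)) = √(u_HP)`. -/

open MeasureTheory

lemma min_eq_half_add_sub_half_abs_sub (a b : ℝ) :
    min a b = 1 / 2 * (a + b) - 1 / 2 * |a - b| := by
  rw [show min a b = a ⊓ b from rfl, inf_eq_half_smul_add_sub_abs_sub' ℝ, abs_sub_comm,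
    smul_eq_mul]
  ring

section Integral

variable {α : Type*} [MeasurableSpace α] {μ : Measure α}

/-- Cauchy–Schwarz for `|g| = (|g| / √h) · √h`. The domination `|g| ≤ h` makes `g` vanish where
`h` does, so this factorisation is exact, and makes `g ^ 2 / h ≤ h` integrable. -/
theorem integral_abs_le_sqrt_integral_sq_div_mul_sqrt_integral {g h : α → ℝ}
    (hg : AEStronglyMeasurable g μ) (hh : Integrable h μ) (hgh : ∀ x, |g x| ≤ h x) :
    ∫ x, |g x| ∂μ ≤ √(∫ x, g x ^ 2 / h x ∂μ) * √(∫ x, h x ∂μ) := by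
  have h_nonneg : ∀ x, 0 ≤ h x := fun x => (abs_nonneg _).trans (hgh x)
  set φ : α → ℝ := fun x => |g x| / √(h x)
  set ψ : α → ℝ := fun x => √(h x)
  have hφψ : ∀ x, φ x * ψ x = |g x| := by
    intro x
    rcases (h_nonneg x).eq_or_lt with h0 | hpos
    · have : |g x| = 0 := le_antisymm (h0 ▸ hgh x) (abs_nonneg _)
      simp [φ, ψ, this]
    · exact div_mul_cancel₀ _ (Real.sqrt_pos.mpr hpos).ne'
  have hφ_sq : ∀ x, φ x ^ 2 = g x ^ 2 / h x := fun x => by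
    rw [div_pow, Real.sq_sqrt (h_nonneg x), sq_abs]
  have hψ_sq : ∀ x, ψ x ^ 2 = h x := fun x => Real.sq_sqrt (h_nonneg x)
  have hφ_sq' : ∀ x, φ x ^ (2 : ℝ) = g x ^ 2 / h x := fun x => by
    rw [Real.rpow_two, hφ_sq]
  have hψ_sq' : ∀ x, ψ x ^ (2 : ℝ) = h x := fun x => by rw [Real.rpow_two, hψ_sq]
  have hφ_meas : AEStronglyMeasurable φ μ :=
    hg.norm.div₀ (Real.continuous_sqrt.comp_aestronglyMeasurable hh.1)
  have hψ_meas : AEStronglyMeasurable ψ μ := Real.continuous_sqrt.comp_aestronglyMeasurable hh.1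
  have hφ_int : Integrable (fun x => φ x ^ 2) μ := by
    refine hh.mono' (hφ_meas.pow 2) (Filter.Eventually.of_forall fun x => ?_)
    rw [Real.norm_eq_abs, abs_of_nonneg (sq_nonneg _), hφ_sq]
    rcases (h_nonneg x).eq_or_lt with h0 | hpos
    · simp [← h0]
    · rw [div_le_iff₀ hpos, ← sq_abs]
      nlinarith [hgh x, abs_nonneg (g x)]
  have hφ_mem : MemLp φ (ENNReal.ofReal 2) μ := by
    rw [ENNReal.ofReal_ofNat]
    exact (memLp_two_iff_integrable_sq hφ_meas).2 hφ_int
  have hψ_mem : MemLp ψ (ENNReal.ofReal 2) μ := by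
    rw [ENNReal.ofReal_ofNat, memLp_two_iff_integrable_sq hψ_meas]
    exact hh.congr (Filter.Eventually.of_forall fun x => (hψ_sq x).symm)
  have hCS := integral_mul_le_Lp_mul_Lq_of_nonneg Real.HolderConjugate.two_two
    (Filter.Eventually.of_forall fun x => div_nonneg (abs_nonneg _) (Real.sqrt_nonneg _))
    (Filter.Eventually.of_forall fun x => Real.sqrt_nonneg _) hφ_mem hψ_mem
  rw [integral_congr_ae (Filter.Eventually.of_forall hφψ),
    integral_congr_ae (Filter.Eventually.of_forall hφ_sq'),
    integral_congr_ae (Filter.Eventually.of_forall hψ_sq')] at hCS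
  simpa only [Real.sqrt_eq_rpow, one_div] using hCS

theorem integral_min_eq_half_integral_add_sub_half_integral_abs_sub {a b : α → ℝ}
    (ha : Integrable a μ) (hb : Integrable b μ) :
    ∫ x, min (a x) (b x) ∂μ = 1 / 2 * ∫ x, a x + b x ∂μ - 1 / 2 * ∫ x, |a x - b x| ∂μ := by
  simp_rw [min_eq_half_add_sub_half_abs_sub]
  rw [integral_sub, integral_const_mul, integral_const_mul]
  · exact (ha.add hb).const_mul _
  · exact (ha.sub hb).abs.const_mul _

end Integral

theorem stmt_13_general {d : ℕ} (f₁ f₂ : (Fin d → ℝ) → ℝ)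
    (hnn₁ : ∀ x, 0 ≤ f₁ x) (hnn₂ : ∀ x, 0 ≤ f₂ x)
    (hi₁ : Integrable f₁) (hi₂ : Integrable f₂)
    (hI₁ : ∫ x, f₁ x = 1) (hI₂ : ∫ x, f₂ x = 1)
    (p₁ p₂ : ℝ) (hp₁ : 0 < p₁) (hp₂ : 0 < p₂) (hsum : p₁ + p₂ = 1) :
    (∀ x, min (p₁ * f₁ x) (p₂ * f₂ x) =
      (1 / 2) * (p₁ * f₁ x + p₂ * f₂ x) - (1 / 2) * |p₁ * f₁ x - p₂ * f₂ x|) ∧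
    ∫ x, min (p₁ * f₁ x) (p₂ * f₂ x) ≥
      1 / 2 - (1 / 2) *
        Real.sqrt (∫ x, (p₁ * f₁ x - p₂ * f₂ x) ^ 2 / (p₁ * f₁ x + p₂ * f₂ x)) := by
  set a : (Fin d → ℝ) → ℝ := fun x => p₁ * f₁ x
  set b : (Fin d → ℝ) → ℝ := fun x => p₂ * f₂ x
  have ha : Integrable a := hi₁.const_mul p₁
  have hb : Integrable b := hi₂.const_mul p₂
  have h_mass : ∫ x, a x + b x = 1 := by
    rw [integral_add ha hb, integral_const_mul, integral_const_mul, hI₁, hI₂, mul_one, mul_one,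
      hsum]
  have h_dom : ∀ x, |a x - b x| ≤ a x + b x := fun x => (abs_sub _ _).trans_eq <| by
    rw [abs_of_nonneg (mul_nonneg hp₁.le (hnn₁ x)), abs_of_nonneg (mul_nonneg hp₂.le (hnn₂ x))]
  have h_cs := integral_abs_le_sqrt_integral_sq_div_mul_sqrt_integral
    (g := fun x => a x - b x) (h := fun x => a x + b x) (ha.sub hb).aestronglyMeasurable
    (ha.add hb) h_dom
  rw [h_mass, Real.sqrt_one, mul_one] at h_cs
  refine ⟨fun x => min_eq_half_add_sub_half_abs_sub _ _, ?_⟩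
  rw [ge_iff_le, integral_min_eq_half_integral_add_sub_half_integral_abs_sub ha hb, h_mass]
  linarith

theorem stmt_13 {d : ℕ} (f₁ f₂ : (Fin d → ℝ) → ℝ)
    (hm₁ : Measurable f₁) (hm₂ : Measurable f₂)
    (hnn₁ : ∀ x, 0 ≤ f₁ x) (hnn₂ : ∀ x, 0 ≤ f₂ x)
    (hi₁ : Integrable f₁) (hi₂ : Integrable f₂)
    (hI₁ : ∫ x, f₁ x = 1) (hI₂ : ∫ x, f₂ x = 1)
    (p₁ p₂ : ℝ) (hp₁ : 0 < p₁) (hp₂ : 0 < p₂) (hsum : p₁ + p₂ = 1) :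
    (∀ x, min (p₁ * f₁ x) (p₂ * f₂ x) =
      (1 / 2) * (p₁ * f₁ x + p₂ * f₂ x) - (1 / 2) * |p₁ * f₁ x - p₂ * f₂ x|) ∧
    ∫ x, min (p₁ * f₁ x) (p₂ * f₂ x) ≥
      1 / 2 - (1 / 2) *
        Real.sqrt (∫ x, (p₁ * f₁ x - p₂ * f₂ x) ^ 2 / (p₁ * f₁ x + p₂ * f₂ x)) :=
  stmt_13_general f₁ f₂ hnn₁ hnn₂ hi₁ hi₂ hI₁ hI₂ p₁ p₂ hp₁ hp₂ hsum
end

section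
/- For densities f₁, f₂ with priors p₁, p₂ > 0 summing to 1, the Henze-Penrose upper bound holds: P_e(f₁,f₂) ≤ 1/2 − 1/2·u_HP(f₁,f₂), where u_HP(f₁,f₂) = ∫ (p₁f₁ − p₂f₂)²/(p₁f₁ + p₂f₂) dx and P_e(f₁,f₂) = ∫ min{p₁f₁, p₂f₂} dx. -/
open MeasureTheory

lemma key_pt (a b : ℝ) (ha : 0 ≤ a) (hb : 0 ≤ b) :
    min a b ≤ (a + b) / 2 - (a - b) ^ 2 / (a + b) / 2 := by
  rcases eq_or_lt_of_le (add_nonneg ha hb) with h | h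
  · have ha0 : a = 0 := by linarith [le_antisymm (by linarith) ha]
    have hb0 : b = 0 := by linarith
    simp [ha0, hb0]
  · have h2 : (a - b) ^ 2 / (a + b) ≤ (a + b) - 2 * min a b := by
      rw [div_le_iff₀ h]
      rcases le_total a b with hab | hab
      · rw [min_eq_left hab]; nlinarith
      · rw [min_eq_right hab]; nlinarith
    linarith

theorem stmt_14 {d : ℕ} (f₁ f₂ : (Fin d → ℝ) → ℝ)
    (hm₁ : Measurable f₁) (hm₂ : Measurable f₂)
    (hnn₁ : ∀ x, 0 ≤ f₁ x) (hnn₂ : ∀ x, 0 ≤ f₂ x)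
    (hi₁ : Integrable f₁) (hi₂ : Integrable f₂)
    (hI₁ : ∫ x, f₁ x = 1) (hI₂ : ∫ x, f₂ x = 1)
    (p₁ p₂ : ℝ) (hp₁ : 0 < p₁) (hp₂ : 0 < p₂) (hsum : p₁ + p₂ = 1) :
    ∫ x, min (p₁ * f₁ x) (p₂ * f₂ x) ≤
      1 / 2 - (1 / 2) *
        ∫ x, (p₁ * f₁ x - p₂ * f₂ x) ^ 2 / (p₁ * f₁ x + p₂ * f₂ x) := by
  set a : (Fin d → ℝ) → ℝ := fun x => p₁ * f₁ x with ha_def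
  set b : (Fin d → ℝ) → ℝ := fun x => p₂ * f₂ x with hb_def
  have hna : ∀ x, 0 ≤ a x := fun x => mul_nonneg hp₁.le (hnn₁ x)
  have hnb : ∀ x, 0 ≤ b x := fun x => mul_nonneg hp₂.le (hnn₂ x)
  have hia : Integrable a := hi₁.const_mul p₁
  have hib : Integrable b := hi₂.const_mul p₂
  have hiab : Integrable (fun x => a x + b x) := hia.add hib
  have hg_nonneg : ∀ x, 0 ≤ (a x - b x) ^ 2 / (a x + b x) :=
    fun x => div_nonneg (sq_nonneg _) (add_nonneg (hna x) (hnb x))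
  have hg_le : ∀ x, (a x - b x) ^ 2 / (a x + b x) ≤ a x + b x := by
    intro x
    rcases eq_or_lt_of_le (add_nonneg (hna x) (hnb x)) with h | h
    · simp [← h]
    · rw [div_le_iff₀ h]; nlinarith [hna x, hnb x]
  have hmeas : Measurable fun x => (a x - b x) ^ 2 / (a x + b x) := by
    exact ((hm₁.const_mul p₁).sub (hm₂.const_mul p₂)).pow_const 2 |>.div
      ((hm₁.const_mul p₁).add (hm₂.const_mul p₂))
  have hig : Integrable (fun x => (a x - b x) ^ 2 / (a x + b x)) := by
    refine Integrable.mono hiab hmeas.aestronglyMeasurable ?_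
    filter_upwards with x
    rw [Real.norm_eq_abs, Real.norm_eq_abs, abs_of_nonneg (hg_nonneg x),
      abs_of_nonneg (add_nonneg (hna x) (hnb x))]
    exact hg_le x
  have himin : Integrable (fun x => min (a x) (b x)) := by
    refine Integrable.mono hia (hia.aestronglyMeasurable.inf hib.aestronglyMeasurable) ?_
    filter_upwards with x
    rw [Real.norm_eq_abs, Real.norm_eq_abs, abs_of_nonneg (le_min (hna x) (hnb x)),
      abs_of_nonneg (hna x)]
    exact min_le_left _ _
  have step : ∫ x, min (a x) (b x) ≤
      ∫ x, ((a x + b x) / 2 - (a x - b x) ^ 2 / (a x + b x) / 2) := by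
    refine integral_mono himin ((hiab.div_const 2).sub (hig.div_const 2)) ?_
    intro x
    exact key_pt (a x) (b x) (hna x) (hnb x)
  have hsplit : ∫ x, ((a x + b x) / 2 - (a x - b x) ^ 2 / (a x + b x) / 2)
      = 1 / 2 - (1 / 2) * ∫ x, (a x - b x) ^ 2 / (a x + b x) := by
    have h1 : ∫ x, a x = p₁ := by
      rw [ha_def]; rw [integral_const_mul, hI₁, mul_one]
    have h2 : ∫ x, b x = p₂ := by
      rw [hb_def]; rw [integral_const_mul, hI₂, mul_one]
    rw [integral_sub (hiab.div_const 2) (hig.div_const 2), integral_div, integral_div,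
      integral_add hia hib, h1, h2, hsum]
    ring
  calc ∫ x, min (a x) (b x) ≤ _ := step
    _ = _ := hsplit
end
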